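/- arXiv:math/9809203 — 2 statements merged into one kernel-verified Lean document; each statement's English description precedes it below -/
import Mathlib

section
/- Let n ≥ 2, θ > 0, and p ∈ Δ_n with p_i > 0 for all i. For every relatively open subset G of S_n, liminf_{γ→0+} γ log Π_{θ,γ,p}(G) ≥ −θ inf_{x∈G} Σ_{i=1}^n p_i log(p_i/x_i), where for x ∈ S_n we set x_n = 1 − Σ_{i=1}^{n-1} x_i and the infimum over the empty set is +∞ (a term p_i log(p_i/x_i) is +∞ when x_i = 0). -/
open MeasureTheory Filter
open scoped ENNReal NNReal Classical

/-- The simplex `S_n = {x ∈ ℝ^{n-1} : x_i ≥ 0, ∑ x_i ≤ 1}`. -/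
def Sn (n : ℕ) : Set (Fin (n - 1) → ℝ) :=
  {x | (∀ i, 0 ≤ x i) ∧ ∑ i, x i ≤ 1}

/-- For `x ∈ ℝ^{n-1}`, the extended coordinates `(x_1, …, x_{n-1}, 1 - ∑ x_i)`
indexed by `Fin n`. -/
noncomputable def xext (n : ℕ) (x : Fin (n - 1) → ℝ) (i : Fin n) : ℝ :=
  if h : (i : ℕ) < n - 1 then x ⟨i, h⟩ else 1 - ∑ j, x j

/-- The Dirichlet distribution `Π_{θ,γ,p}` on `S_n`: the measure with density
`Γ(γ⁻¹θ)/∏ Γ(γ⁻¹θ pᵢ) · ∏ xᵢ^{γ⁻¹θ pᵢ - 1}` (with `x_n = 1 - ∑_{i<n} x_i`)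
with respect to Lebesgue measure on `ℝ^{n-1}`, supported on `S_n`. -/
noncomputable def dirichletS (n : ℕ) (θ γ : ℝ) (p : Fin n → ℝ) :
    Measure (Fin (n - 1) → ℝ) :=
  volume.withDensity ((Sn n).indicator fun x =>
    ENNReal.ofReal ((Real.Gamma (θ / γ) / ∏ i, Real.Gamma (θ * p i / γ)) *
      ∏ i, xext n x i ^ (θ * p i / γ - 1)))

/-- The cost `∑_{i=1}^n pᵢ log (pᵢ / xᵢ)` of a point `x ∈ S_n`, a summand being `+∞`
when `xᵢ = 0` (and `pᵢ > 0`). -/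
noncomputable def entCost (n : ℕ) (p : Fin n → ℝ) (x : Fin (n - 1) → ℝ) : EReal :=
  ∑ i, if xext n x i = 0 then (⊤ : EReal)
    else ((p i * Real.log (p i / xext n x i) : ℝ) : EReal)

/-! Fix `x ∈ G` of finite cost, so that all `xᵢ > 0`, and `κ < 1`. A small ball around `x` lies
in `G` and on it every coordinate `yᵢ` is at least `κ xᵢ`; as `yᵢ ≤ 1`, the density there is at
least `C_γ ∏ (κ xᵢ)^(θ pᵢ / γ)`, where `C_γ = Γ(θ/γ) / ∏ Γ(θ pᵢ/γ)`. Hence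
`γ log Π(G) ≥ γ log C_γ + θ ∑ pᵢ log (κ xᵢ) + γ log vol(ball)`, and Stirling's formula gives
`γ log C_γ → -θ ∑ pᵢ log pᵢ`. Letting `κ → 1` yields the bound `-θ ∑ pᵢ log (pᵢ / xᵢ)`. -/

open Real Topology

lemma le_mul_log_sub_sub {s t : ℝ} (hs : 0 < s) (hst : s ≤ t) :
    (t - s) * log s ≤ (t * log t - t) - (s * log s - s) := by
  have ht : 0 < t := hs.trans_le hst
  have h := mul_le_mul_of_nonneg_left (log_le_sub_one_of_pos (div_pos hs ht)) ht.le
  rw [log_div hs.ne' ht.ne', mul_sub_one, mul_div_cancel₀ _ ht.ne'] at h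
  nlinarith

lemma mul_log_sub_sub_le {s t : ℝ} (hs : 0 < s) (hst : s ≤ t) :
    (t * log t - t) - (s * log s - s) ≤ (t - s) * log t := by
  have ht : 0 < t := hs.trans_le hst
  have h := mul_le_mul_of_nonneg_left (log_le_sub_one_of_pos (div_pos ht hs)) hs.le
  rw [log_div ht.ne' hs.ne', mul_sub_one, mul_div_cancel₀ _ hs.ne'] at h
  nlinarith

lemma le_log_factorial (k : ℕ) : k * log k - k ≤ log k.factorial := by
  rcases eq_or_ne k 0 with rfl | hk
  · simp
  have := Stirling.le_log_factorial_stirling hk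
  have : 0 ≤ log (k : ℝ) := log_natCast_nonneg k
  have : 0 ≤ log (2 * π) := log_nonneg (by linarith [two_le_pi])
  linarith

lemma log_factorial_le {k : ℕ} (hk : k ≠ 0) : log k.factorial ≤ k * log k - k + log k + 1 := by
  obtain ⟨m, rfl⟩ := Nat.exists_eq_succ_of_ne_zero hk
  have hanti := Stirling.log_stirlingSeq'_antitone (Nat.zero_le m)
  simp only [Function.comp_apply, Nat.succ_eq_add_one, zero_add, Stirling.stirlingSeq_one] at hanti
  rw [Stirling.log_stirlingSeq_formula, log_div (exp_pos 1).ne' (by positivity), log_exp,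
    log_sqrt zero_le_two, log_mul two_ne_zero (by positivity), log_div (by positivity)
    (exp_pos 1).ne', log_exp] at hanti
  have : 0 ≤ log ((m + 1 : ℕ) : ℝ) := log_natCast_nonneg _
  push_cast at hanti this ⊢
  nlinarith

lemma abs_log_Gamma_sub_le {t : ℝ} (ht : 2 ≤ t) :
    |log (Gamma t) - (t * log t - t)| ≤ 2 * log t + 1 := by
  set k := ⌊t⌋₊
  have hk2 : 2 ≤ k := Nat.le_floor (by exact_mod_cast ht)
  have hk2' : (2 : ℝ) ≤ k := by exact_mod_cast hk2
  have hkt : (k : ℝ) ≤ t := Nat.floor_le (by linarith)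
  have htk : t < k + 1 := Nat.lt_floor_add_one t
  have hlogk : log k ≤ log t := log_le_log (by linarith) hkt
  have hlogk0 : 0 ≤ log (k : ℝ) := log_natCast_nonneg k
  have hfac : Gamma (k + 1) = k.factorial := Gamma_nat_eq_factorial k
  have hGamma_le : Gamma t ≤ k.factorial :=
    hfac ▸ Gamma_strictMonoOn_Ici.monotoneOn ht (by simp only [Set.mem_Ici]; linarith) htk.le
  have hle_Gamma : Gamma k ≤ Gamma t :=
    Gamma_strictMonoOn_Ici.monotoneOn hk2' ht hkt
  have hGamma_k : log (Gamma k) = log k.factorial - log k := by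
    rw [← hfac, Gamma_add_one (by positivity), log_mul (by positivity)
      (Gamma_pos_of_pos (by positivity)).ne']
    ring
  have hup : log (Gamma t) ≤ log k.factorial :=
    log_le_log (Gamma_pos_of_pos (by linarith)) hGamma_le
  have hlow : log (Gamma k) ≤ log (Gamma t) :=
    log_le_log (Gamma_pos_of_pos (by linarith)) hle_Gamma
  have h1 := log_factorial_le (k := k) (by omega)
  have h2 := le_log_factorial k
  have h3 := le_mul_log_sub_sub (by linarith) hkt
  have h4 := mul_log_sub_sub_le (by linarith) hkt
  have h5 : (t - k) * log t ≤ log t := by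
    nlinarith [log_nonneg (by linarith : (1 : ℝ) ≤ t)]
  rw [abs_le]
  constructor <;> nlinarith

lemma isLittleO_log_Gamma_sub :
    (fun t => log (Gamma t) - (t * log t - t)) =o[atTop] id := by
  have hbound : (fun t => log (Gamma t) - (t * log t - t)) =O[atTop] fun t => 2 * log t + 1 := by
    refine Asymptotics.IsBigO.of_bound 1 ?_
    filter_upwards [eventually_ge_atTop 2] with t ht
    have hlog : 0 ≤ 2 * log t + 1 := by linarith [log_nonneg (by linarith : (1 : ℝ) ≤ t)]
    simpa only [Real.norm_eq_abs, one_mul, abs_of_nonneg hlog] using abs_log_Gamma_sub_le ht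
  exact hbound.trans_isLittleO
    ((isLittleO_log_id_atTop.const_mul_left 2).add (Asymptotics.isLittleO_const_id_atTop 1))

lemma tendsto_mul_log_Gamma_div_sub {a : ℝ} (ha : 0 < a) :
    Tendsto (fun γ => γ * log (Gamma (a / γ)) - (a * log (a / γ) - a)) (𝓝[>] 0) (𝓝 0) := by
  have hdiv : Tendsto (fun γ : ℝ => a / γ) (𝓝[>] 0) atTop := by
    simpa only [div_eq_mul_inv] using tendsto_inv_nhdsGT_zero.const_mul_atTop ha
  have h := (isLittleO_log_Gamma_sub.tendsto_div_nhds_zero.comp hdiv).mul_const a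
  rw [zero_mul] at h
  refine h.congr' ?_
  filter_upwards [self_mem_nhdsWithin] with γ (hγ : 0 < γ)
  simp only [Function.comp_apply, id]
  field_simp

noncomputable def dirichletConst {ι : Type*} [Fintype ι] (θ γ : ℝ) (p : ι → ℝ) : ℝ :=
  Gamma (θ / γ) / ∏ i, Gamma (θ * p i / γ)

section dirichletConst

variable {ι : Type*} [Fintype ι] {θ γ : ℝ} {p : ι → ℝ}

lemma dirichletConst_pos (hθ : 0 < θ) (hγ : 0 < γ) (hp : ∀ i, 0 < p i) :
    0 < dirichletConst θ γ p :=
  div_pos (Gamma_pos_of_pos (by positivity))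
    (Finset.prod_pos fun i _ => Gamma_pos_of_pos (by have := hp i; positivity))

lemma dirichletConst_nonneg (hθ : 0 ≤ θ) (hγ : 0 ≤ γ) (hp : ∀ i, 0 ≤ p i) :
    0 ≤ dirichletConst θ γ p :=
  div_nonneg (Gamma_nonneg_of_nonneg (by positivity))
    (Finset.prod_nonneg fun i _ => Gamma_nonneg_of_nonneg (by have := hp i; positivity))

/-- Stirling's formula makes the linear terms `a log (1/γ) - a` of the numerator and of the
denominator cancel, because `∑ pᵢ = 1`. -/
lemma tendsto_mul_log_dirichletConst (hθ : 0 < θ) (hp : ∀ i, 0 < p i) (hsum : ∑ i, p i = 1) :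
    Tendsto (fun γ => γ * log (dirichletConst θ γ p)) (𝓝[>] 0)
      (𝓝 (-(θ * ∑ i, p i * log (p i)))) := by
  set E : ℝ → ℝ → ℝ := fun a γ => γ * log (Gamma (a / γ)) - (a * log (a / γ) - a)
  have hE : Tendsto (fun γ => E θ γ - ∑ i, E (θ * p i) γ - θ * ∑ i, p i * log (p i)) (𝓝[>] 0)
      (𝓝 (0 - ∑ _i : ι, 0 - θ * ∑ i, p i * log (p i))) :=
    ((tendsto_mul_log_Gamma_div_sub hθ).sub (tendsto_finsetSum _ fun i _ =>
      tendsto_mul_log_Gamma_div_sub (mul_pos hθ (hp i)))).sub_const _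
  rw [Finset.sum_const_zero, sub_zero, zero_sub] at hE
  refine hE.congr' ?_
  filter_upwards [self_mem_nhdsWithin] with γ (hγ : 0 < γ)
  have hlog : ∀ i, log (θ * p i / γ) = log (p i) + log (θ / γ) := fun i => by
    rw [mul_comm θ, mul_div_assoc, log_mul (hp i).ne' (by positivity)]
  rw [dirichletConst, log_div (Gamma_pos_of_pos (by positivity)).ne'
    (Finset.prod_pos fun i _ => Gamma_pos_of_pos (by have := hp i; positivity)).ne',
    log_prod fun i _ => (Gamma_pos_of_pos (by have := hp i; positivity)).ne']
  simp only [E, hlog, Finset.sum_sub_distrib, Finset.mul_sum]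
  simp only [← Finset.sum_mul, ← Finset.mul_sum, mul_add, Finset.sum_add_distrib, mul_assoc, hsum]
  ring

end dirichletConst

section Simplex

variable {n : ℕ}

lemma xext_nonneg {y : Fin (n - 1) → ℝ} (hy : y ∈ Sn n) (i : Fin n) : 0 ≤ xext n y i := by
  unfold xext
  split_ifs
  · exact hy.1 _
  · exact sub_nonneg.2 hy.2

lemma xext_le_one {y : Fin (n - 1) → ℝ} (hy : y ∈ Sn n) (i : Fin n) : xext n y i ≤ 1 := by
  have hsum_nonneg : 0 ≤ ∑ j, y j := Finset.sum_nonneg fun j _ => hy.1 j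
  unfold xext
  split_ifs
  · exact (Finset.single_le_sum (fun j _ => hy.1 j) (Finset.mem_univ _)).trans hy.2
  · linarith

lemma mem_Sn_iff {y : Fin (n - 1) → ℝ} : y ∈ Sn n ↔ ∀ i, 0 ≤ xext n y i := by
  refine ⟨xext_nonneg, fun h => ?_⟩
  rcases n with _ | n
  · simp [Sn]
  · refine ⟨fun j => ?_, ?_⟩
    · simpa [xext, j.isLt] using h ⟨j, by omega⟩
    · simpa [xext] using h (Fin.last n)

lemma continuous_xext (i : Fin n) : Continuous fun y : Fin (n - 1) → ℝ => xext n y i := by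
  unfold xext
  split_ifs
  · exact continuous_apply _
  · fun_prop

lemma eventually_mul_xext_lt {x : Fin (n - 1) → ℝ} (hx : ∀ i, 0 < xext n x i) {κ : ℝ}
    (hκ : κ < 1) : ∀ᶠ y in 𝓝 x, ∀ i, κ * xext n x i < xext n y i :=
  Filter.eventually_all.2 fun i =>
    (continuous_xext i).continuousAt.eventually_const_lt (by nlinarith [hx i])

end Simplex

namespace EReal

lemma coe_finset_sum {ι : Type*} (s : Finset ι) (f : ι → ℝ) :
    ((∑ i ∈ s, f i : ℝ) : EReal) = ∑ i ∈ s, (f i : EReal) :=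
  map_sum (⟨⟨(↑), coe_zero⟩, coe_add⟩ : ℝ →+ EReal) f s

lemma finset_sum_eq_top {ι : Type*} {s : Finset ι} {f : ι → EReal} (hf : ∀ j ∈ s, f j ≠ ⊥)
    {i : ι} (hi : i ∈ s) (hfi : f i = ⊤) : ∑ j ∈ s, f j = ⊤ := by
  classical
  have hrest : ∑ j ∈ s.erase i, f j ≠ ⊥ :=
    Finset.sum_induction _ (· ≠ ⊥) (fun a b ha hb => add_ne_bot_iff.2 ⟨ha, hb⟩) (coe_ne_bot 0)
      fun j hj => hf j (Finset.mem_of_mem_erase hj)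
  rw [← Finset.add_sum_erase s f hi, hfi, top_add_of_ne_bot hrest]

lemma lt_coe_div_of_coe_mul_lt {θ c : ℝ} (hθ : 0 < θ) {I : EReal} (h : (θ : EReal) * I < c) :
    I < ((c / θ : ℝ) : EReal) := by
  induction I using EReal.rec with
  | bot => exact bot_lt_coe _
  | coe a =>
    rw [← coe_mul, EReal.coe_lt_coe_iff] at h
    rw [EReal.coe_lt_coe_iff, lt_div_iff₀ hθ]
    linarith
  | top => exact absurd h (by rw [coe_mul_top_of_pos hθ]; exact not_top_lt)

end EReal

section entCost

variable {n : ℕ} {p : Fin n → ℝ} {x : Fin (n - 1) → ℝ}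

lemma entCost_eq_top {i : Fin n} (hi : xext n x i = 0) : entCost n p x = ⊤ :=
  EReal.finset_sum_eq_top (fun j _ => by split_ifs; exacts [top_ne_bot, EReal.coe_ne_bot _])
    (Finset.mem_univ i) (if_pos hi)

lemma entCost_eq_coe (hx : ∀ i, xext n x i ≠ 0) :
    entCost n p x = ((∑ i, p i * log (p i / xext n x i) : ℝ) : EReal) := by
  simp only [entCost, hx, if_false, EReal.coe_finset_sum]

lemma exists_forall_xext_pos_lt_neg_mul {θ r : ℝ} (hθ : 0 < θ) {G : Set (Fin (n - 1) → ℝ)}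
    (hGS : G ⊆ Sn n) (hr : (r : EReal) < -(θ * ⨅ x ∈ G, entCost n p x)) :
    ∃ x ∈ G, (∀ i, 0 < xext n x i) ∧ r < -(θ * ∑ i, p i * log (p i / xext n x i)) := by
  rw [EReal.lt_neg_comm, ← EReal.coe_neg] at hr
  obtain ⟨x, hx⟩ := iInf_lt_iff.1 (EReal.lt_coe_div_of_coe_mul_lt hθ hr)
  obtain ⟨hxG, hlt⟩ := iInf_lt_iff.1 hx
  have hxpos : ∀ i, 0 < xext n x i := fun i =>
    (xext_nonneg (hGS hxG) i).lt_of_ne' fun h => by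
      rw [entCost_eq_top h] at hlt
      exact not_top_lt hlt
  rw [entCost_eq_coe fun i => (hxpos i).ne', EReal.coe_lt_coe_iff, lt_div_iff₀ hθ] at hlt
  exact ⟨x, hxG, hxpos, by linarith⟩

end entCost

section dirichletS

variable {n : ℕ} {θ γ : ℝ} {p : Fin n → ℝ} {B G : Set (Fin (n - 1) → ℝ)} {c : Fin n → ℝ}

/-- On `S_n` all coordinates are at most `1`, so `yᵢ^(aᵢ - 1) ≥ yᵢ^aᵢ ≥ cᵢ^aᵢ` where `yᵢ ≥ cᵢ`. -/
lemma ofReal_mul_volume_le_dirichletS (hθ : 0 ≤ θ) (hγ : 0 ≤ γ) (hp : ∀ i, 0 ≤ p i)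
    (hB : MeasurableSet B) (hBG : B ⊆ G) (hBS : B ⊆ Sn n) (hc : ∀ i, 0 < c i)
    (hcB : ∀ y ∈ B, ∀ i, c i ≤ xext n y i) :
    ENNReal.ofReal (dirichletConst θ γ p * ∏ i, c i ^ (θ * p i / γ)) * volume B ≤
      dirichletS n θ γ p G := by
  have hdensity : ∀ y ∈ B, ENNReal.ofReal (dirichletConst θ γ p * ∏ i, c i ^ (θ * p i / γ)) ≤
      (Sn n).indicator (fun x => ENNReal.ofReal (dirichletConst θ γ p *
        ∏ i, xext n x i ^ (θ * p i / γ - 1))) y := by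
    intro y hy
    rw [Set.indicator_of_mem (hBS hy)]
    refine ENNReal.ofReal_le_ofReal (mul_le_mul_of_nonneg_left ?_
      (dirichletConst_nonneg hθ hγ hp))
    refine Finset.prod_le_prod (fun i _ => (rpow_pos_of_pos (hc i) _).le) fun i _ => ?_
    have hyi : 0 < xext n y i := (hc i).trans_le (hcB y hy i)
    calc c i ^ (θ * p i / γ) ≤ xext n y i ^ (θ * p i / γ) :=
          rpow_le_rpow (hc i).le (hcB y hy i) (by have := hp i; positivity)
      _ ≤ xext n y i ^ (θ * p i / γ - 1) :=
          rpow_le_rpow_of_exponent_ge hyi (xext_le_one (hBS hy) i) (by linarith)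
  calc ENNReal.ofReal (dirichletConst θ γ p * ∏ i, c i ^ (θ * p i / γ)) * volume B
      = ∫⁻ _ in B, ENNReal.ofReal (dirichletConst θ γ p * ∏ i, c i ^ (θ * p i / γ)) :=
        (setLIntegral_const _ _).symm
    _ ≤ ∫⁻ y in B, (Sn n).indicator (fun x => ENNReal.ofReal (dirichletConst θ γ p *
          ∏ i, xext n x i ^ (θ * p i / γ - 1))) y := setLIntegral_mono' hB hdensity
    _ ≤ ∫⁻ y in G, (Sn n).indicator (fun x => ENNReal.ofReal (dirichletConst θ γ p *
          ∏ i, xext n x i ^ (θ * p i / γ - 1))) y := lintegral_mono_set hBG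
    _ ≤ dirichletS n θ γ p G := withDensity_apply_le _ _

lemma coe_le_mul_log_dirichletS (hθ : 0 < θ) (hγ : 0 < γ) (hp : ∀ i, 0 < p i)
    (hB : MeasurableSet B) (hBG : B ⊆ G) (hBS : B ⊆ Sn n) (hc : ∀ i, 0 < c i)
    (hcB : ∀ y ∈ B, ∀ i, c i ≤ xext n y i) {v : ℝ} (hv : 0 < v) (hvB : volume B = .ofReal v) :
    ((γ * log (dirichletConst θ γ p) + θ * ∑ i, p i * log (c i) + γ * log v : ℝ) : EReal) ≤
      γ * ENNReal.log (dirichletS n θ γ p G) := by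
  have hC := dirichletConst_pos hθ hγ hp
  have hprod : 0 < ∏ i, c i ^ (θ * p i / γ) := Finset.prod_pos fun i _ => rpow_pos_of_pos (hc i) _
  have hmeas := ofReal_mul_volume_le_dirichletS hθ.le hγ.le (fun i => (hp i).le) hB hBG hBS hc hcB
  rw [hvB, ← ENNReal.ofReal_mul (by positivity)] at hmeas
  have hlog := ENNReal.log_monotone hmeas
  rw [ENNReal.log_ofReal_of_pos (by positivity)] at hlog
  have hreal : γ * log ((dirichletConst θ γ p * ∏ i, c i ^ (θ * p i / γ)) * v) =
      γ * log (dirichletConst θ γ p) + θ * ∑ i, p i * log (c i) + γ * log v := by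
    rw [log_mul (by positivity) hv.ne', log_mul hC.ne' hprod.ne',
      log_prod fun i _ => (rpow_pos_of_pos (hc i) _).ne']
    simp only [log_rpow (hc _), mul_add, Finset.mul_sum]
    field_simp
  rw [← hreal, EReal.coe_mul]
  exact mul_le_mul_of_nonneg_left hlog (by exact_mod_cast hγ.le)

end dirichletS

lemma coe_le_liminf_mul_log_dirichletS {n : ℕ} {θ r : ℝ} (hθ : 0 < θ) {p : Fin n → ℝ}
    (hp : ∀ i, 0 < p i) (hsum : ∑ i, p i = 1) {U : Set (Fin (n - 1) → ℝ)} (hU : IsOpen U)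
    {x : Fin (n - 1) → ℝ} (hxU : x ∈ U) (hx : ∀ i, 0 < xext n x i)
    (hr : r < -(θ * ∑ i, p i * log (p i / xext n x i))) :
    (r : EReal) ≤ liminf (fun γ : ℝ => (γ : EReal) * ENNReal.log (dirichletS n θ γ p (U ∩ Sn n)))
      (𝓝[>] 0) := by
  set cost := ∑ i, p i * log (p i / xext n x i)
  -- shrinking every coordinate by the factor `κ` costs `θ log κ = r + θ cost` in the exponent
  set κ := exp ((r + θ * cost) / θ)
  have hκ0 : 0 < κ := exp_pos _
  have hκ1 : κ < 1 := exp_lt_one_iff.2 (div_neg_of_neg_of_pos (by linarith) hθ)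
  obtain ⟨δ, hδ, hball⟩ := Metric.mem_nhds_iff.1 ((eventually_mul_xext_lt hx hκ1).and
    (hU.mem_nhds hxU))
  have hBG : Metric.ball x δ ⊆ U ∩ Sn n := fun y hy =>
    ⟨(hball hy).2, mem_Sn_iff.2 fun i => ((mul_pos hκ0 (hx i)).trans ((hball hy).1 i)).le⟩
  set v := (volume (Metric.ball x δ)).toReal
  have hvB : volume (Metric.ball x δ) = .ofReal v :=
    (ENNReal.ofReal_toReal measure_ball_lt_top.ne).symm
  have hv : 0 < v := ENNReal.toReal_pos (Metric.measure_ball_pos _ _ hδ).ne' measure_ball_lt_top.ne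
  have hlim : Tendsto (fun γ => γ * log (dirichletConst θ γ p) +
      θ * ∑ i, p i * log (κ * xext n x i) + γ * log v) (𝓝[>] 0) (𝓝 r) := by
    have hval : -(θ * ∑ i, p i * log (p i)) + θ * ∑ i, p i * log (κ * xext n x i) + 0 * log v
        = r := by
      have hsplit : ∀ i, p i * log (κ * xext n x i) =
          p i * log κ + (p i * log (p i) - p i * log (p i / xext n x i)) := fun i => by
        rw [log_mul hκ0.ne' (hx i).ne', log_div (hp i).ne' (hx i).ne']
        ring
      simp only [hsplit, Finset.sum_add_distrib, Finset.sum_sub_distrib, ← Finset.sum_mul, hsum,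
        κ, log_exp]
      field_simp
      ring
    have h := ((tendsto_mul_log_dirichletConst hθ hp hsum).add_const
      (θ * ∑ i, p i * log (κ * xext n x i))).add
      ((tendsto_nhdsWithin_of_tendsto_nhds tendsto_id).mul_const (log v))
    rwa [hval] at h
  calc (r : EReal) = liminf (fun γ => ((γ * log (dirichletConst θ γ p) +
        θ * ∑ i, p i * log (κ * xext n x i) + γ * log v : ℝ) : EReal)) (𝓝[>] 0) :=
        (((continuous_coe_real_ereal.tendsto r).comp hlim).liminf_eq).symm
    _ ≤ _ := liminf_le_liminf <| by
        filter_upwards [self_mem_nhdsWithin] with γ (hγ : 0 < γ)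
        exact coe_le_mul_log_dirichletS hθ hγ hp Metric.isOpen_ball.measurableSet hBG
          (hBG.trans Set.inter_subset_right) (fun i => mul_pos hκ0 (hx i))
          (fun y hy i => ((hball hy).1 i).le) hv hvB

theorem dirichlet_LDP_lower_general (n : ℕ) (θ : ℝ) (hθ : 0 < θ)
    (p : Fin n → ℝ) (hp : ∀ i, 0 < p i) (hsum : ∑ i, p i = 1)
    (G : Set (Fin (n - 1) → ℝ)) (hG : ∃ U, IsOpen U ∧ G = U ∩ Sn n) :
    -((θ : EReal) * ⨅ x ∈ G, entCost n p x) ≤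
      liminf (fun γ : ℝ => (γ : EReal) * ENNReal.log (dirichletS n θ γ p G))
        (nhdsWithin 0 (Set.Ioi 0)) := by
  obtain ⟨U, hU, rfl⟩ := hG
  refine EReal.ge_of_forall_gt_iff_ge.1 fun r hr => ?_
  obtain ⟨x, ⟨hxU, -⟩, hx, hrx⟩ :=
    exists_forall_xext_pos_lt_neg_mul hθ Set.inter_subset_right hr
  exact coe_le_liminf_mul_log_dirichletS hθ hp hsum hU hxU hx hrx

/-- the large deviation lower bound for relatively open subsets of `S_n`
of `S_n` for the Dirichlet distributions `Π_{θ,γ,p}` as `γ → 0⁺`, with rate function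
`θ ∑ pᵢ log(pᵢ/xᵢ)` (the infimum over the empty set being `+∞`). -/
theorem dirichlet_LDP_lower (n : ℕ) (hn : 2 ≤ n) (θ : ℝ) (hθ : 0 < θ)
    (p : Fin n → ℝ) (hp : ∀ i, 0 < p i) (hsum : ∑ i, p i = 1)
    (G : Set (Fin (n - 1) → ℝ)) (hG : ∃ U, IsOpen U ∧ G = U ∩ Sn n) :
    -((θ : EReal) * ⨅ x ∈ G, entCost n p x) ≤
      liminf (fun γ : ℝ => (γ : EReal) * ENNReal.log (dirichletS n θ γ p G))
        (nhdsWithin 0 (Set.Ioi 0)) :=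
  dirichlet_LDP_lower_general n θ hθ p hp hsum G hG
end

section
/- Let θ > 0 and let ν0, μ be Borel probability measures on [0,1]. For a finite Borel partition j = (B_1,…,B_r) of [0,1], let I^θ_{π_j(ν0)}(π_j(μ)) denote the finite-dimensional rate function θ Σ_{i: ν0(B_i)>0} ν0(B_i) log(ν0(B_i)/μ(B_i)) if every i with μ(B_i) > 0 satisfies ν0(B_i) > 0, and +∞ otherwise (a summand being +∞ when ν0(B_i) > 0 = μ(B_i)). Then sup over all finite Borel partitions j of [0,1] of I^θ_{π_j(ν0)}(π_j(μ)) equals I^θ_{ν0}(μ), where I^θ_{ν0}(μ) = θ H(ν0|μ) if μ ≪ ν0 and +∞ otherwise. -/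
open MeasureTheory
open scoped ENNReal NNReal Classical

/-- The relative entropy `H(μ|ν) = ∫ log (dμ/dν) dμ` if `μ ≪ ν`, and `+∞` otherwise. -/
noncomputable def relEnt {α : Type*} [MeasurableSpace α] (μ ν : Measure α) : EReal :=
  if μ ≪ ν then
    ((∫⁻ x, ENNReal.ofReal (llr μ ν x) ∂μ : ℝ≥0∞) : EReal)
      - ((∫⁻ x, ENNReal.ofReal (-llr μ ν x) ∂μ : ℝ≥0∞) : EReal)
  else ⊤

/-- The finite-dimensional rate function along a finite partition `B`:
`θ ∑_{i : ν₀(Bᵢ)>0} ν₀(Bᵢ) log(ν₀(Bᵢ)/μ(Bᵢ))` if every `i` with `μ(Bᵢ) > 0` has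
`ν₀(Bᵢ) > 0`, and `+∞` otherwise (a summand being `+∞` when `ν₀(Bᵢ) > 0 = μ(Bᵢ)`). -/
noncomputable def fdRate {α : Type*} [MeasurableSpace α] (θ : ℝ)
    (ν₀ μ : Measure α) {r : ℕ} (B : Fin r → Set α) : EReal :=
  if ∀ i, 0 < μ (B i) → 0 < ν₀ (B i) then
    (θ : EReal) * ∑ i, (if ν₀ (B i) = 0 then (0 : EReal)
      else if μ (B i) = 0 then (⊤ : EReal)
      else (((ν₀ (B i)).toReal * Real.log ((ν₀ (B i)).toReal / (μ (B i)).toReal) : ℝ)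
        : EReal))
  else ⊤

/-!
Let `μ` and `ν` be mutually absolutely continuous. Every partition sum
`∑ ν(Bᵢ) log (ν(Bᵢ)/μ(Bᵢ))` is at most `H(ν|μ)`, by Gibbs' inequality on each cell. Conversely,
`t log (t/m) ≥ c t + t - eᶜ m` gives, for any `g` constant on the cells, the finite
Donsker–Varadhan bound `∑ ν(Bᵢ) log (ν(Bᵢ)/μ(Bᵢ)) ≥ ∫ g dν + ν(X) - ∫ eᵍ dμ`. Take for `g` the
log-likelihood ratio rounded down to the grid `(1/n)ℤ` and clamped to `[-n, n]`, and for the cells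
its level sets: then `g ≥ min (llr ν μ) n - 1/n`, and `eᵍ ≤ dν/dμ + e⁻ⁿ`, so the partition sum is
at least `∫ min (llr ν μ) n dν - O(1/n)`, which tends to `H(ν|μ)` by monotone convergence.
If `μ ≪ ν` or `ν ≪ μ` fails, a two-cell partition already has rate `+∞`.
-/

open Filter Topology Real

lemma EReal.coe_finset_sum_s13 {ι : Type*} (s : Finset ι) (f : ι → ℝ) :
    ((∑ i ∈ s, f i : ℝ) : EReal) = ∑ i ∈ s, (f i : EReal) :=
  map_sum (⟨⟨(↑), EReal.coe_zero⟩, EReal.coe_add⟩ : ℝ →+ EReal) f s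

lemma EReal.Tendsto.add_coe {β : Type*} {l : Filter β} {f : β → EReal} {g : β → ℝ} {a : EReal}
    {b : ℝ} (hf : Tendsto f l (𝓝 a)) (hg : Tendsto g l (𝓝 b)) :
    Tendsto (fun x => f x + g x) l (𝓝 (a + b)) :=
  (EReal.continuousAt_add (Or.inr (EReal.coe_ne_bot b))
    (Or.inr (EReal.coe_ne_top b))).tendsto.comp (hf.prodMk_nhds (EReal.tendsto_coe.2 hg))

lemma mul_add_sub_exp_mul_le_mul_log_div {t m : ℝ} (c : ℝ) (ht : 0 ≤ t) (hm : 0 ≤ m)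
    (htm : m = 0 → t = 0) : c * t + t - exp c * m ≤ t * log (t / m) := by
  rcases ht.eq_or_lt with rfl | ht
  · simpa using mul_nonneg (exp_pos c).le hm
  have hm : 0 < m := hm.lt_of_ne fun h => ht.ne' (htm h.symm)
  have h := one_sub_inv_le_log_of_pos (x := t / (exp c * m)) (by positivity)
  rw [inv_div, log_div ht.ne' (by positivity), log_mul (exp_pos c).ne' hm.ne', log_exp] at h
  rw [log_div ht.ne' hm.ne']
  have : t * (1 - exp c * m / t) = t - exp c * m := by field_simp
  nlinarith

section Partition

variable {α ι : Type*} [MeasurableSpace α]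

def IsMeasurablePartition (B : ι → Set α) : Prop :=
  (∀ i, MeasurableSet (B i)) ∧ Pairwise (Function.onFun Disjoint B) ∧ (⋃ i, B i) = Set.univ

lemma isMeasurablePartition_preimage_singleton [MeasurableSpace ι] [MeasurableSingletonClass ι]
    {e : α → ι} (he : Measurable e) : IsMeasurablePartition fun i => e ⁻¹' {i} :=
  ⟨fun i => he (measurableSet_singleton i),
    fun _ _ hij => Set.disjoint_left.2 fun _ hi hj => hij (hi.symm.trans hj),
    Set.eq_univ_of_forall fun x => Set.mem_iUnion.2 ⟨e x, rfl⟩⟩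

lemma isMeasurablePartition_pair {t : Set α} (ht : MeasurableSet t) :
    IsMeasurablePartition ![t, tᶜ] := by
  refine ⟨fun i => ?_, fun i j hij => ?_, ?_⟩
  · fin_cases i
    exacts [ht, ht.compl]
  · fin_cases i <;> fin_cases j <;>
      simp_all [Function.onFun, disjoint_compl_right, disjoint_compl_left]
  · simpa [Set.eq_univ_iff_forall] using fun x => em (x ∈ t)

lemma IsMeasurablePartition.integral_eq_sum [Fintype ι] {B : ι → Set α}
    (hB : IsMeasurablePartition B) {ν : Measure α} {f : α → ℝ} (hf : Integrable f ν) :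
    ∫ x, f x ∂ν = ∑ i, ∫ x in B i, f x ∂ν := by
  rw [← setIntegral_univ, ← hB.2.2, integral_iUnion hB.1 hB.2.1 hf.integrableOn, tsum_fintype]

lemma integral_comp_eq_sum_measureReal_preimage [Fintype ι] [MeasurableSpace ι]
    [MeasurableSingletonClass ι] {e : α → ι} (he : Measurable e) (ρ : Measure α)
    [IsFiniteMeasure ρ] (g : ι → ℝ) :
    ∫ x, g (e x) ∂ρ = ∑ i, ρ.real (e ⁻¹' {i}) * g i := by
  rw [← integral_map he.aemeasurable (Integrable.of_finite).aestronglyMeasurable,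
    integral_fintype Integrable.of_finite]
  simp_rw [map_measureReal_apply he (measurableSet_singleton _), smul_eq_mul]

end Partition

section Quantization

/-- `quantValue n (quantIndex n t)` is `⌊n t⌋ / n` clamped to `[-n, n]`. -/
noncomputable def quantIndex (n : ℕ) (t : ℝ) : Fin (2 * n ^ 2 + 1) :=
  Fin.clamp (⌊n * t⌋ + n ^ 2).toNat (2 * n ^ 2)

noncomputable def quantValue (n : ℕ) (j : Fin (2 * n ^ 2 + 1)) : ℝ := ((j : ℝ) - n ^ 2) / n

lemma measurable_quantIndex (n : ℕ) : Measurable (quantIndex n) :=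
  (Measurable.of_discrete (f := fun z : ℤ => Fin.clamp (z + n ^ 2).toNat (2 * n ^ 2))).comp
    (Int.measurable_floor.comp (measurable_const_mul _))

lemma quantIndex_sub_sq_mem_Icc (n : ℕ) (t : ℝ) :
    (quantIndex n t : ℤ) - n ^ 2 ∈ Set.Icc (min ⌊n * t⌋ (n ^ 2)) (max ⌊n * t⌋ (-(n ^ 2 : ℤ))) := by
  simp only [quantIndex, Fin.clamp, Set.mem_Icc]
  push_cast
  omega

lemma min_sub_inv_le_quantValue {n : ℕ} (hn : 0 < n) (t : ℝ) :
    min t n - 1 / n ≤ quantValue n (quantIndex n t) := by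
  have hn' : (0 : ℝ) < n := by exact_mod_cast hn
  obtain ⟨h, -⟩ := quantIndex_sub_sq_mem_Icc n t
  have h' : min (⌊n * t⌋ : ℝ) (n ^ 2) ≤ (quantIndex n t : ℝ) - n ^ 2 := by exact_mod_cast h
  have hfl := Int.lt_floor_add_one ((n : ℝ) * t)
  rw [quantValue, le_div_iff₀ hn', sub_mul, div_mul_cancel₀ _ hn'.ne']
  rcases min_choice (⌊n * t⌋ : ℝ) (n ^ 2) with hm | hm <;> rw [hm] at h'
  · nlinarith [min_le_left t n]
  · nlinarith [min_le_right t n]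

lemma quantValue_le_max {n : ℕ} (hn : 0 < n) (t : ℝ) :
    quantValue n (quantIndex n t) ≤ max t (-n) := by
  have hn' : (0 : ℝ) < n := by exact_mod_cast hn
  obtain ⟨-, h⟩ := quantIndex_sub_sq_mem_Icc n t
  have h' : (quantIndex n t : ℝ) - n ^ 2 ≤ max (⌊n * t⌋ : ℝ) (-(n ^ 2)) := by exact_mod_cast h
  have hfl := Int.floor_le ((n : ℝ) * t)
  rw [quantValue, div_le_iff₀ hn']
  rcases max_choice (⌊n * t⌋ : ℝ) (-(n ^ 2)) with hm | hm <;> rw [hm] at h'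
  · nlinarith [le_max_left t (-n)]
  · nlinarith [le_max_right t (-n)]

end Quantization

section Llr

variable {α : Type*} [MeasurableSpace α] {ν μ : Measure α}

lemma llr_restrict [SigmaFinite ν] [SigmaFinite μ] (hνμ : ν ≪ μ) {s : Set α}
    (hs : MeasurableSet s) :
    llr (ν.restrict s) (μ.restrict s) =ᵐ[ν.restrict s] llr ν μ := by
  have h : ν.restrict s = (μ.restrict s).withDensity (ν.rnDeriv μ) := by
    rw [← restrict_withDensity hs, Measure.withDensity_rnDeriv_eq ν μ hνμ]
  have hrn : (ν.restrict s).rnDeriv (μ.restrict s) =ᵐ[μ.restrict s] ν.rnDeriv μ := by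
    rw [h]
    exact Measure.rnDeriv_withDensity _ (Measure.measurable_rnDeriv ν μ)
  filter_upwards [(hνμ.restrict s).ae_le hrn] with x hx
  simp [llr, hx]

lemma mul_log_le_setIntegral_llr [IsFiniteMeasure ν] [IsFiniteMeasure μ] (hνμ : ν ≪ μ)
    (hint : Integrable (llr ν μ) ν) {s : Set α} (hs : MeasurableSet s) :
    ν.real s * log (ν.real s / μ.real s) ≤ ∫ x in s, llr ν μ x ∂ν := by
  have hνμs : ν.restrict s ≪ μ.restrict s := hνμ.restrict s
  have hints : Integrable (llr (ν.restrict s) (μ.restrict s)) (ν.restrict s) :=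
    hint.restrict.congr (llr_restrict hνμ hs).symm
  have h := InformationTheory.mul_log_le_toReal_klDiv hνμs hints
  rw [InformationTheory.toReal_klDiv hνμs hints, integral_congr_ae (llr_restrict hνμ hs)] at h
  simp only [measureReal_restrict_apply_univ] at h
  linarith

lemma sum_mul_log_le_integral_llr {ι : Type*} [Fintype ι] [IsFiniteMeasure ν] [IsFiniteMeasure μ]
    (hνμ : ν ≪ μ) (hint : Integrable (llr ν μ) ν) {B : ι → Set α}
    (hB : IsMeasurablePartition B) :
    ∑ i, ν.real (B i) * log (ν.real (B i) / μ.real (B i)) ≤ ∫ x, llr ν μ x ∂ν := by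
  rw [hB.integral_eq_sum hint]
  exact Finset.sum_le_sum fun i _ => mul_log_le_setIntegral_llr hνμ hint (hB.1 i)

lemma le_sum_mul_log_preimage {ι : Type*} [Fintype ι] [MeasurableSpace ι]
    [MeasurableSingletonClass ι] [IsFiniteMeasure ν] [IsFiniteMeasure μ] (hνμ : ν ≪ μ)
    {e : α → ι} (he : Measurable e) (v : ι → ℝ) :
    ∫ x, v (e x) ∂ν + ν.real Set.univ - ∫ x, exp (v (e x)) ∂μ ≤
      ∑ i, ν.real (e ⁻¹' {i}) * log (ν.real (e ⁻¹' {i}) / μ.real (e ⁻¹' {i})) := by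
  have hν := integral_comp_eq_sum_measureReal_preimage he ν (fun _ => 1)
  simp only [integral_const, smul_eq_mul, mul_one] at hν
  rw [integral_comp_eq_sum_measureReal_preimage he ν v,
    integral_comp_eq_sum_measureReal_preimage he μ (fun i => exp (v i)), hν,
    ← Finset.sum_add_distrib, ← Finset.sum_sub_distrib]
  refine Finset.sum_le_sum fun i _ => ?_
  have := mul_add_sub_exp_mul_le_mul_log_div (v i)
    (measureReal_nonneg (μ := ν) (s := e ⁻¹' {i})) (measureReal_nonneg (μ := μ) (s := e ⁻¹' {i}))
    fun h => by rw [measureReal_eq_zero_iff] at h ⊢; exact hνμ h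
  linarith

lemma integrable_min_llr [IsFiniteMeasure ν] [IsFiniteMeasure μ] (hνμ : ν ≪ μ) (c : ℝ) :
    Integrable (fun x => min (llr ν μ x) c) ν := by
  refine Integrable.mono'
    ((integrable_const (μ := ν) |c|).add (Measure.integrable_toReal_rnDeriv (μ := μ)))
    ((measurable_llr ν μ).min measurable_const).aestronglyMeasurable ?_
  filter_upwards [exp_neg_llr hνμ] with x hx
  rw [Pi.add_apply, ← hx, Real.norm_eq_abs, abs_le]
  have := add_one_le_exp (-llr ν μ x)
  constructor
  · rcases min_choice (llr ν μ x) c with h | h <;> rw [h] <;>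
      linarith [neg_abs_le c, abs_nonneg c, exp_pos (-llr ν μ x)]
  · linarith [min_le_right (llr ν μ x) c, le_abs_self c, exp_pos (-llr ν μ x)]

lemma ofReal_neg_min_of_nonneg (a : ℝ) {c : ℝ} (hc : 0 ≤ c) :
    ENNReal.ofReal (-min a c) = ENNReal.ofReal (-a) := by
  rcases le_total a c with h | h
  · rw [min_eq_left h]
  · rw [min_eq_right h, ENNReal.ofReal_of_nonpos (neg_nonpos.2 hc),
      ENNReal.ofReal_of_nonpos (by linarith)]

lemma lintegral_ofReal_neg_llr_ne_top [IsFiniteMeasure ν] [IsFiniteMeasure μ] (hνμ : ν ≪ μ) :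
    ∫⁻ x, ENNReal.ofReal (-llr ν μ x) ∂ν ≠ ⊤ := by
  simpa only [Pi.neg_apply, ofReal_neg_min_of_nonneg _ le_rfl] using
    (integrable_min_llr hνμ 0).neg.lintegral_lt_top.ne

lemma integrable_llr_of_lintegral_ne_top [IsFiniteMeasure ν] [IsFiniteMeasure μ] (hνμ : ν ≪ μ)
    (hP : ∫⁻ x, ENNReal.ofReal (llr ν μ x) ∂ν ≠ ⊤) : Integrable (llr ν μ) ν := by
  have hpos : Integrable (fun x => max (llr ν μ x) 0) ν := by
    refine (lintegral_ofReal_ne_top_iff_integrable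
      ((measurable_llr ν μ).max measurable_const).aestronglyMeasurable
      (ae_of_all _ fun x => le_max_right (llr ν μ x) 0)).1 ?_
    simpa [ENNReal.ofReal_max] using hP
  refine (hpos.add (integrable_min_llr hνμ 0)).congr (ae_of_all _ fun x => ?_)
  simp [max_add_min]

lemma relEnt_of_integrable (hνμ : ν ≪ μ) (hint : Integrable (llr ν μ) ν) :
    relEnt ν μ = ((∫ x, llr ν μ x ∂ν : ℝ) : EReal) := by
  rw [relEnt, if_pos hνμ, integral_eq_lintegral_pos_part_sub_lintegral_neg_part hint,
    EReal.coe_sub, EReal.coe_ennreal_toReal hint.lintegral_lt_top.ne]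
  exact congrArg _ (EReal.coe_ennreal_toReal hint.neg.lintegral_lt_top.ne).symm

lemma relEnt_of_not_integrable [IsFiniteMeasure ν] [IsFiniteMeasure μ] (hνμ : ν ≪ μ)
    (hint : ¬ Integrable (llr ν μ) ν) : relEnt ν μ = ⊤ := by
  have hP : ∫⁻ x, ENNReal.ofReal (llr ν μ x) ∂ν = ⊤ := by
    by_contra hP
    exact hint (integrable_llr_of_lintegral_ne_top hνμ hP)
  rw [relEnt, if_pos hνμ, hP, ← EReal.coe_ennreal_toReal (lintegral_ofReal_neg_llr_ne_top hνμ),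
    EReal.coe_ennreal_top, EReal.top_sub_coe]

lemma tendsto_integral_min_llr [IsFiniteMeasure ν] [IsFiniteMeasure μ] (hνμ : ν ≪ μ) :
    Tendsto (fun n : ℕ => ((∫ x, min (llr ν μ x) n ∂ν : ℝ) : EReal)) atTop
      (𝓝 (relEnt ν μ)) := by
  set N := ∫⁻ x, ENNReal.ofReal (-llr ν μ x) ∂ν
  have hN : N ≠ ⊤ := lintegral_ofReal_neg_llr_ne_top hνμ
  have hsplit : ∀ n : ℕ, ((∫ x, min (llr ν μ x) n ∂ν : ℝ) : EReal) =
      ((∫⁻ x, min (ENNReal.ofReal (llr ν μ x)) n ∂ν : ℝ≥0∞) : EReal) +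
        ((-N.toReal : ℝ) : EReal) := by
    intro n
    have hint := integrable_min_llr hνμ n
    rw [integral_eq_lintegral_pos_part_sub_lintegral_neg_part hint, sub_eq_add_neg, EReal.coe_add,
      EReal.coe_ennreal_toReal hint.lintegral_lt_top.ne]
    simp_rw [ENNReal.ofReal_min, ENNReal.ofReal_natCast,
      ofReal_neg_min_of_nonneg _ (Nat.cast_nonneg n)]
    rfl
  have hQ : Tendsto (fun n : ℕ => ∫⁻ x, min (ENNReal.ofReal (llr ν μ x)) n ∂ν) atTop
      (𝓝 (∫⁻ x, ENNReal.ofReal (llr ν μ x) ∂ν)) := by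
    refine lintegral_tendsto_of_tendsto_of_monotone
      (fun n => ((measurable_llr ν μ).ennreal_ofReal.min measurable_const).aemeasurable)
      (ae_of_all _ fun x m n hmn => min_le_min_left _ (Nat.cast_le.2 hmn))
      (ae_of_all _ fun x => ?_)
    simpa using tendsto_const_nhds.min ENNReal.tendsto_nat_nhds_top
  simp_rw [hsplit]
  rw [relEnt, if_pos hνμ, ← EReal.coe_ennreal_toReal hN, sub_eq_add_neg, ← EReal.coe_neg]
  exact EReal.Tendsto.add_coe (EReal.tendsto_coe_ennreal.2 hQ) tendsto_const_nhds

lemma integral_min_llr_sub_le_integral_quantValue [IsFiniteMeasure ν] [IsFiniteMeasure μ]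
    (hνμ : ν ≪ μ) {n : ℕ} (hn : 0 < n) :
    ∫ x, min (llr ν μ x) n ∂ν - ν.real Set.univ / n ≤
      ∫ x, quantValue n (quantIndex n (llr ν μ x)) ∂ν := by
  have he := (measurable_quantIndex n).comp (measurable_llr ν μ)
  have h := integral_mono ((integrable_min_llr hνμ n).sub (integrable_const (1 / n : ℝ)))
    ((Integrable.of_finite (f := quantValue n)).comp_measurable he)
    fun x => min_sub_inv_le_quantValue hn (llr ν μ x)
  simp only [Pi.sub_apply, Function.comp_apply] at h
  rwa [integral_sub (integrable_min_llr hνμ n) (integrable_const _), integral_const,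
    smul_eq_mul, ← mul_div_assoc, mul_one] at h

lemma integral_exp_quantValue_le [IsFiniteMeasure ν] [IsFiniteMeasure μ] (hμν : μ ≪ ν)
    (hνμ : ν ≪ μ) {n : ℕ} (hn : 0 < n) :
    ∫ x, exp (quantValue n (quantIndex n (llr ν μ x))) ∂μ ≤
      ν.real Set.univ + μ.real Set.univ / n := by
  have he := (measurable_quantIndex n).comp (measurable_llr ν μ)
  have h := integral_mono_ae
    ((Integrable.of_finite (f := fun j => exp (quantValue n j))).comp_measurable he)
    ((Measure.integrable_toReal_rnDeriv (μ := ν)).add (integrable_const (exp (-n))))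
    (by
      filter_upwards [exp_llr_of_ac' ν μ hμν] with x hx
      calc exp (quantValue n (quantIndex n (llr ν μ x))) ≤ exp (max (llr ν μ x) (-n)) :=
            exp_le_exp.2 (quantValue_le_max hn _)
        _ ≤ exp (llr ν μ x) + exp (-n) := by
            rw [exp_monotone.map_max]
            exact max_le_add_of_nonneg (exp_pos _).le (exp_pos _).le
        _ = _ := by rw [hx]; rfl)
  simp only [Pi.add_apply, Function.comp_apply] at h
  rw [integral_add Measure.integrable_toReal_rnDeriv (integrable_const _),
    Measure.integral_toReal_rnDeriv hνμ, integral_const, smul_eq_mul] at h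
  have hexp : exp (-n) ≤ 1 / n := by
    rw [exp_neg, one_div]
    exact inv_anti₀ (by exact_mod_cast hn) (by linarith [add_one_le_exp (n : ℝ)])
  have : μ.real Set.univ * exp (-n) ≤ μ.real Set.univ / n := by
    rw [div_eq_mul_one_div]
    exact mul_le_mul_of_nonneg_left hexp measureReal_nonneg
  linarith

lemma exists_isMeasurablePartition_integral_min_llr_le [IsFiniteMeasure ν] [IsFiniteMeasure μ]
    (hμν : μ ≪ ν) (hνμ : ν ≪ μ) {n : ℕ} (hn : 0 < n) :
    ∃ (r : ℕ) (B : Fin r → Set α), IsMeasurablePartition B ∧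
      ∫ x, min (llr ν μ x) n ∂ν - (ν.real Set.univ + μ.real Set.univ) / n ≤
        ∑ i, ν.real (B i) * log (ν.real (B i) / μ.real (B i)) := by
  have he := (measurable_quantIndex n).comp (measurable_llr ν μ)
  refine ⟨_, _, isMeasurablePartition_preimage_singleton he, ?_⟩
  have hdv := le_sum_mul_log_preimage hνμ he (quantValue n)
  have hlow := integral_min_llr_sub_le_integral_quantValue hνμ hn
  have hup := integral_exp_quantValue_le hμν hνμ hn
  rw [add_div]
  simp only [Function.comp_apply] at hdv
  linarith

lemma exists_measurableSet_of_not_absolutelyContinuous (h : ¬ μ ≪ ν) :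
    ∃ t, MeasurableSet t ∧ ν t = 0 ∧ μ t ≠ 0 := by
  by_contra! H
  exact h (Measure.AbsolutelyContinuous.mk fun t ht h0 => H t ht h0)

lemma fdRate_of_ac (θ : ℝ) (hμν : μ ≪ ν) (hνμ : ν ≪ μ) {r : ℕ} (B : Fin r → Set α) :
    fdRate θ ν μ B =
      θ * ((∑ i, ν.real (B i) * log (ν.real (B i) / μ.real (B i)) : ℝ) : EReal) := by
  have hcond : ∀ i, 0 < μ (B i) → 0 < ν (B i) :=
    fun i h => pos_iff_ne_zero.2 fun h0 => h.ne' (hμν h0)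
  rw [fdRate, if_pos hcond, EReal.coe_finset_sum_s13]
  congr 1
  refine Finset.sum_congr rfl fun i _ => ?_
  by_cases h0 : ν (B i) = 0
  · simp [h0, measureReal_def]
  · rw [if_neg h0, if_neg fun h => h0 (hνμ h)]
    rfl

lemma exists_fdRate_eq_top {θ : ℝ} (hθ : 0 < θ) (h : ¬ (μ ≪ ν ∧ ν ≪ μ)) :
    ∃ (r : ℕ) (B : Fin r → Set α), IsMeasurablePartition B ∧ fdRate θ ν μ B = ⊤ := by
  rcases not_and_or.1 h with hμν | hνμ
  · obtain ⟨t, ht, hνt, hμt⟩ := exists_measurableSet_of_not_absolutelyContinuous hμν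
    refine ⟨2, ![t, tᶜ], isMeasurablePartition_pair ht, if_neg fun hcond => ?_⟩
    simpa [hνt] using hcond 0 (pos_iff_ne_zero.2 hμt)
  · obtain ⟨t, ht, hμt, hνt⟩ := exists_measurableSet_of_not_absolutelyContinuous hνμ
    refine ⟨2, ![t, tᶜ], isMeasurablePartition_pair ht, ?_⟩
    rw [fdRate]
    split_ifs
    · rw [Fin.sum_univ_two]
      simp only [Matrix.cons_val_zero, Matrix.cons_val_one, hνt, hμt, if_false, if_true]
      rw [EReal.top_add_of_ne_bot ?_, EReal.coe_mul_top_of_pos hθ]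
      by_cases h1 : ν tᶜ = 0 <;> by_cases h2 : μ tᶜ = 0 <;> simp [h1, h2, -EReal.coe_mul]
    · rfl

theorem iSup_fdRate_of_ac [IsFiniteMeasure ν] [IsFiniteMeasure μ] {θ : ℝ} (hθ : 0 ≤ θ)
    (hμν : μ ≪ ν) (hνμ : ν ≪ μ) :
    ⨆ (r : ℕ) (B : Fin r → Set α) (_ : IsMeasurablePartition B), fdRate θ ν μ B =
      θ * relEnt ν μ := by
  refine le_antisymm (iSup_le fun r => iSup₂_le fun B hB => ?_) ?_
  · rw [fdRate_of_ac θ hμν hνμ B]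
    refine mul_le_mul_of_nonneg_left ?_ (EReal.coe_nonneg.2 hθ)
    by_cases hint : Integrable (llr ν μ) ν
    · rw [relEnt_of_integrable hνμ hint]
      exact EReal.coe_le_coe_iff.2 (sum_mul_log_le_integral_llr hνμ hint hB)
    · rw [relEnt_of_not_integrable hνμ hint]
      exact le_top
  · set c := ν.real Set.univ + μ.real Set.univ
    have hlim : Tendsto (fun n : ℕ => (θ : EReal) *
        (((∫ x, min (llr ν μ x) n ∂ν : ℝ) : EReal) + ((-(c / n) : ℝ) : EReal))) atTop
        (𝓝 (θ * relEnt ν μ)) := by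
      simpa using EReal.Tendsto.const_mul (EReal.Tendsto.add_coe (tendsto_integral_min_llr hνμ)
        (tendsto_const_div_atTop_nhds_zero_nat c).neg)
          (Or.inl (EReal.coe_ne_bot θ)) (Or.inl (EReal.coe_ne_top θ))
    refine le_of_tendsto hlim (eventually_atTop.2 ⟨1, fun n hn => ?_⟩)
    obtain ⟨r, B, hB, hsum⟩ := exists_isMeasurablePartition_integral_min_llr_le hμν hνμ hn
    refine le_iSup_of_le r (le_iSup₂_of_le B hB ?_)
    rw [fdRate_of_ac θ hμν hνμ B, ← EReal.coe_add]
    exact mul_le_mul_of_nonneg_left (EReal.coe_le_coe_iff.2 (by linarith))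
      (EReal.coe_nonneg.2 hθ)

end Llr

/-- the supremum, over all finite Borel partitions `j` of `[0,1]`, of the
finite-dimensional rate functions `I^θ_{π_j(ν₀)}(π_j(μ))` equals
`I^θ_{ν₀}(μ) = θ H(ν₀|μ)` if `μ ≪ ν₀` and `+∞` otherwise. -/
theorem iSup_fdRate_eq_rate
    (θ : ℝ) (hθ : 0 < θ)
    (ν₀ μ : Measure (Set.Icc (0:ℝ) 1))
    [IsProbabilityMeasure ν₀] [IsProbabilityMeasure μ] :
    (⨆ (r : ℕ) (B : Fin r → Set (Set.Icc (0:ℝ) 1))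
        (_ : (∀ i, MeasurableSet (B i)) ∧ Pairwise (Function.onFun Disjoint B) ∧
          (⋃ i, B i) = Set.univ),
        fdRate θ ν₀ μ B) =
      if μ ≪ ν₀ then (θ : EReal) * relEnt ν₀ μ else ⊤ := by
  by_cases h : μ ≪ ν₀ ∧ ν₀ ≪ μ
  · rw [if_pos h.1]
    exact iSup_fdRate_of_ac hθ.le h.1 h.2
  obtain ⟨r, B, hB, htop⟩ := exists_fdRate_eq_top hθ h
  have hrate : (if μ ≪ ν₀ then (θ : EReal) * relEnt ν₀ μ else ⊤) = ⊤ := by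
    split_ifs with hμν
    · rw [relEnt, if_neg fun hνμ => h ⟨hμν, hνμ⟩, EReal.coe_mul_top_of_pos hθ]
    · rfl
  rw [hrate, eq_top_iff, ← htop]
  exact le_iSup_of_le r (le_iSup₂_of_le B hB le_rfl)
end
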